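/- Let 0 < t < 1 and t + t² < F < 2. Then −16F⁴t²(t+1)² + F²(16t⁶ + 48t⁵ + 72t⁴ + 64t³ + 56t² + 32t + 8) − 4t²(t+1)²(t⁴ + 2t³ + 3t² + 2t + 2) > 0. -/
import Mathlib

/-- Appendix polynomial inequality `#(F,t) > 0` for `0 < t < 1`, `t + t² < F < 2`,
where `t = √H_R`. -/
theorem sharp_polynomial_inequality (F t : ℝ) (ht0 : 0 < t) (ht1 : t < 1)
    (hFlow : t + t ^ 2 < F) (hF2 : F < 2) :
    -16 * F ^ 4 * t ^ 2 * (t + 1) ^ 2 +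
        F ^ 2 * (16 * t ^ 6 + 48 * t ^ 5 + 72 * t ^ 4 + 64 * t ^ 3 + 56 * t ^ 2 + 32 * t + 8) -
        4 * t ^ 2 * (t + 1) ^ 2 * (t ^ 4 + 2 * t ^ 3 + 3 * t ^ 2 + 2 * t + 2) > 0 := by
  have hF0 : 0 < F := lt_trans (add_pos ht0 (pow_pos ht0 2)) hFlow
  have hl : 0 < F ^ 2 - (t + t ^ 2) ^ 2 := by nlinarith
  have hr : 0 < 4 - F ^ 2 := by nlinarith
  have h4l : 0 < 4 - (t + t ^ 2) ^ 2 := by nlinarith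
  have hq4 : 0 < -4 * (t - 1) ^ 2 * (t + 2) ^ 2 *
      (t ^ 4 + 2 * t ^ 3 - 9 * t ^ 2 - 10 * t - 2) := by
    have h1 : t ^ 4 + 2 * t ^ 3 - 9 * t ^ 2 - 10 * t - 2 < 0 := by nlinarith
    have h2 : 0 < (1 - t) ^ 2 := pow_pos (by linarith) 2
    have h3 : 0 < (t + 2) ^ 2 := pow_pos (by linarith) 2
    nlinarith [mul_pos h2 h3]
  have hql : 0 < 4 * t ^ 3 * (1 - t) * (t + 1) * (t + 2) *
      (4 * t ^ 6 + 16 * t ^ 5 + 28 * t ^ 4 + 28 * t ^ 3 + 19 * t ^ 2 + 10 * t + 3) := by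
    have h1 : (0:ℝ) < 4 * t ^ 3 := by positivity
    have h5 : 0 < 4 * t ^ 6 + 16 * t ^ 5 + 28 * t ^ 4 + 28 * t ^ 3 + 19 * t ^ 2 + 10 * t + 3 := by
      positivity
    exact mul_pos (mul_pos (mul_pos (mul_pos h1 (by linarith : (0:ℝ) < 1 - t))
      (by linarith : (0:ℝ) < t + 1)) (by linarith : (0:ℝ) < t + 2)) h5
  have P1 := mul_pos hq4 hl
  have P2 := mul_pos hql hr
  have P3 := mul_pos (mul_pos (mul_pos (by nlinarith : (0:ℝ) < 16 * t ^ 2 * (t + 1) ^ 2) hl) hr) h4l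
  nlinarith [P1, P2, P3, h4l]
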